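/- Let X be a real n×p matrix and let a, k be integers with 1 ≤ a ≤ n and a ≤ k ≤ p. Then the supremum of tr(WᵀXᵀXW) over all W ∈ ℝ^{p×a} with WᵀW = I_a and at most k nonzero rows equals the supremum of Σ_{i=1}^p s_i Σ_{j=1}^a (X_iᵀ U_j)² over all binary vectors s ∈ {0,1}^p with Σ_i s_i ≤ k and all U ∈ ℝ^{n×a} with UᵀU = I_a, where U_j denotes the j-th column of U. -/

import Mathlib

open Matrix BigOperators

noncomputable section

/-- Squared Frobenius norm of a real matrix. -/
def frobSq {n m : ℕ} (M : Matrix (Fin n) (Fin m) ℝ) : ℝ := ∑ i, ∑ j, (M i j) ^ 2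

/-- A vector is binary if each entry is 0 or 1. -/
def IsBinary {p : ℕ} (s : Fin p → ℝ) : Prop := ∀ i, s i = 0 ∨ s i = 1

/-- Stiefel set: matrices with orthonormal columns. -/
def Stiefel (n a : ℕ) : Set (Matrix (Fin n) (Fin a) ℝ) := {U | Uᵀ * U = 1}

/-- Squared Euclidean norm of column `i` of `X`. -/
def colNormSq {n p : ℕ} (X : Matrix (Fin n) (Fin p) ℝ) (i : Fin p) : ℝ :=
  ∑ r, (X r i) ^ 2

/-- μ(s) = Σ_i s_i ‖X_i‖². -/
def muF {n p : ℕ} (X : Matrix (Fin n) (Fin p) ℝ) (s : Fin p → ℝ) : ℝ :=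
  ∑ i, s i * colNormSq X i

/-- η(s) = inf over Stiefel matrices U of ‖X diag(s) − U Uᵀ X diag(s)‖_F². -/
def etaF {n p : ℕ} (X : Matrix (Fin n) (Fin p) ℝ) (a : ℕ) (s : Fin p → ℝ) : ℝ :=
  sInf ((fun U : Matrix (Fin n) (Fin a) ℝ =>
    frobSq (X * diagonal s - U * Uᵀ * (X * diagonal s))) '' Stiefel n a)

/-- π(s) = sup over Stiefel matrices U of ‖U Uᵀ X diag(s)‖_F². -/
def piF {n p : ℕ} (X : Matrix (Fin n) (Fin p) ℝ) (a : ℕ) (s : Fin p → ℝ) : ℝ :=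
  sSup ((fun U : Matrix (Fin n) (Fin a) ℝ =>
    frobSq (U * Uᵀ * (X * diagonal s))) '' Stiefel n a)

/-- Feasibility for Problem (2): binary with at most k ones. -/
def Feas {p : ℕ} (k : ℕ) (s : Fin p → ℝ) : Prop :=
  IsBinary s ∧ ∑ i, s i ≤ (k : ℝ)

/-- Optimality for Problem (2): feasible and maximizing π. -/
def Opt2 {n p : ℕ} (X : Matrix (Fin n) (Fin p) ℝ) (a k : ℕ) (s : Fin p → ℝ) : Prop :=
  Feas k s ∧ ∀ s' : Fin p → ℝ, Feas k s' → piF X a s' ≤ piF X a s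

/-- Feasibility for Problem (7) with parameter η. -/
def Feas7 {n p : ℕ} (X : Matrix (Fin n) (Fin p) ℝ) (a k : ℕ) (η : ℝ) (s : Fin p → ℝ) : Prop :=
  Feas k s ∧ etaF X a s ≤ η

/-- Optimality for Problem (7): feasible and maximizing μ. -/
def Opt7 {n p : ℕ} (X : Matrix (Fin n) (Fin p) ℝ) (a k : ℕ) (η : ℝ) (s : Fin p → ℝ) : Prop :=
  Feas7 X a k η s ∧ ∀ s' : Fin p → ℝ, Feas7 X a k η s' → muF X s' ≤ muF X s

/-- Number of nonzero rows of a matrix. -/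
def nnzRows {p a : ℕ} (W : Matrix (Fin p) (Fin a) ℝ) : ℕ :=
  {i : Fin p | ∃ j, W i j ≠ 0}.ncard

/-!
Both problems are compared through the Frobenius norm: `tr(WᵀXᵀXW) = ‖XW‖²`, and for binary `s`
the objective of (2) is `‖diag(s) XᵀU‖²`. Multiplying by a matrix with orthonormal columns never
increases this norm and preserves it on matrices whose columns lie in its column space.

Given a feasible `W` supported on the rows `T`, take `U` whose columns span those of `XW`; then
`‖XW‖² = ‖UᵀXW‖² = ‖Wᵀ diag(1_T) XᵀU‖² ≤ ‖diag(1_T) XᵀU‖²`. Given a feasible `(s, U)`, enlarge the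
support of `s` to a set `S` with `a ≤ |S| ≤ k` and take `W` supported on `S` whose columns span
those of `Y = diag(1_S) XᵀU`; then `‖diag(s) XᵀU‖² ≤ ‖Y‖² = ‖WᵀY‖² = ‖WᵀXᵀU‖² ≤ ‖XW‖²`.
So every value of each problem is dominated by a value of the other, and the suprema agree.
-/

open Module Submodule Set in
theorem exists_orthonormal_forall_mem_span {𝕜 E ι : Type*} [RCLike 𝕜] [NormedAddCommGroup E]
    [InnerProductSpace 𝕜 E] [FiniteDimensional 𝕜 E] [Fintype ι] (f : ι → E)
    (h : Fintype.card ι ≤ finrank 𝕜 E) :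
    ∃ u : ι → E, Orthonormal 𝕜 u ∧ ∀ j, f j ∈ span 𝕜 (range u) := by
  classical
  set K := span 𝕜 (range f)
  let b := stdOrthonormalBasis 𝕜 K
  set v := range (K.subtypeₗᵢ ∘ b)
  have hb : Orthonormal 𝕜 (K.subtypeₗᵢ ∘ b) := b.orthonormal.comp_linearIsometry _
  have hv : Orthonormal 𝕜 ((↑) : v → E) :=
    (orthonormal_subtype_range hb.linearIndependent.injective).2 hb
  -- extend an orthonormal basis of `K` to one of `E`, then keep `card ι` of its vectors
  obtain ⟨w, B, hvw, hB⟩ := hv.exists_orthonormalBasis_extension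
  have hv_card : v.toFinset.card ≤ Fintype.card ι :=
    calc v.toFinset.card ≤ Fintype.card (Fin (finrank 𝕜 K)) := by
          rw [Set.toFinset_card]; exact Fintype.card_range_le _
      _ ≤ Fintype.card ι := by rw [Fintype.card_fin]; exact finrank_range_le_card f
  have hw_card : Fintype.card ι ≤ w.card := by
    simpa [finrank_eq_card_basis B.toBasis] using h
  obtain ⟨w', hvw', hw'w, hcard⟩ := Finset.exists_subsuperset_card_eq
    (by simpa using hvw) hv_card hw_card
  let e : ι ≃ w' := Fintype.equivOfCardEq (by simp [hcard])
  refine ⟨fun i => (e i : E), ?_, fun j => ?_⟩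
  · have hBo : Orthonormal 𝕜 ((↑) : w → E) := hB ▸ B.orthonormal
    exact hBo.comp (fun i => ⟨e i, hw'w (e i).2⟩) fun i i' hii' => e.injective
      (Subtype.ext (congrArg Subtype.val hii' :))
  · have hfK : f j ∈ span 𝕜 v := by
      have := congrArg K.subtype (b.sum_repr ⟨f j, subset_span ⟨j, rfl⟩⟩)
      rw [map_sum] at this
      rw [show f j = K.subtype ⟨f j, subset_span ⟨j, rfl⟩⟩ from rfl, ← this]
      refine sum_mem fun i _ => ?_
      rw [map_smul]
      exact smul_mem _ _ (subset_span ⟨i, rfl⟩)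
    refine span_mono ?_ hfK
    intro x hx
    exact ⟨e.symm ⟨x, hvw' (by simpa using hx)⟩, by simp⟩

namespace Matrix

variable {m ι : Type*} [Fintype m] [Fintype ι]

theorem exists_orthonormal_cols_mul_transpose_mul_eq [DecidableEq ι] (Y : Matrix m ι ℝ)
    (h : Fintype.card ι ≤ Fintype.card m) :
    ∃ U : Matrix m ι ℝ, Uᵀ * U = 1 ∧ U * (Uᵀ * Y) = Y := by
  obtain ⟨u, hu, hYu⟩ := exists_orthonormal_forall_mem_span (𝕜 := ℝ)
    (fun j => WithLp.toLp 2 (fun i => Y i j) : ι → EuclideanSpace ℝ m) (by simpa using h)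
  choose c hc using fun j => (Submodule.mem_span_range_iff_exists_fun ℝ).1 (hYu j)
  let U : Matrix m ι ℝ := of fun i l => u l i
  have hU : Uᵀ * U = 1 := by
    ext l l'
    rw [mul_apply, one_apply, ← orthonormal_iff_ite.1 hu l l']
    simp [U, PiLp.inner_apply, mul_comm]
  have hY : Y = U * of fun l j => c j l := by
    ext i j
    have := congrArg (· i) (hc j)
    simp only [WithLp.ofLp_sum, WithLp.ofLp_smul, Finset.sum_apply, Pi.smul_apply,
      smul_eq_mul] at this
    simp [mul_apply, U, ← this, mul_comm]
  refine ⟨U, hU, ?_⟩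
  rw [hY, ← Matrix.mul_assoc Uᵀ, hU, Matrix.one_mul]

theorem exists_orthonormal_cols_supported_mul_transpose_mul_eq [DecidableEq m] [DecidableEq ι]
    (S : Finset m) (Y : Matrix m ι ℝ) (hS : Fintype.card ι ≤ S.card)
    (hY : ∀ i ∉ S, ∀ j, Y i j = 0) :
    ∃ W : Matrix m ι ℝ, Wᵀ * W = 1 ∧ (∀ i ∉ S, ∀ j, W i j = 0) ∧ W * (Wᵀ * Y) = Y := by
  -- `P` embeds `ℝ^S` isometrically into `ℝ^m`: find the frame in `ℝ^S` and push it forward.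
  let P : Matrix m S ℝ := (1 : Matrix m m ℝ).submatrix id (↑)
  have hP : Pᵀ * P = 1 := by
    rw [transpose_submatrix, transpose_one, ← submatrix_mul _ _ _ _ _ Function.bijective_id,
      Matrix.one_mul, submatrix_one _ Subtype.val_injective]
  have hPY : P * (Pᵀ * Y) = Y := by
    have hPtY : Pᵀ * Y = Y.submatrix (↑) id := by
      rw [transpose_submatrix, transpose_one]
      exact one_submatrix_mul _ (Equiv.refl m) Y
    ext i j
    rw [hPtY, mul_apply]
    simp only [P, submatrix_apply, id_eq, one_apply, ite_mul, one_mul, zero_mul]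
    rw [Finset.sum_coe_sort S (fun l => if i = l then Y l j else 0), Finset.sum_ite_eq]
    split_ifs with hi
    · rfl
    · exact (hY i hi j).symm
  obtain ⟨V, hV, hVY⟩ := exists_orthonormal_cols_mul_transpose_mul_eq (Pᵀ * Y) (by simpa using hS)
  refine ⟨P * V, ?_, fun i hi j => ?_, ?_⟩
  · rw [transpose_mul, Matrix.mul_assoc, ← Matrix.mul_assoc Pᵀ, hP, Matrix.one_mul, hV]
  · simp only [P, mul_apply, submatrix_apply, id_eq, one_apply]
    exact Finset.sum_eq_zero fun l _ => by rw [if_neg (by rintro rfl; exact hi l.2), zero_mul]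
  · rw [transpose_mul, Matrix.mul_assoc, Matrix.mul_assoc, hVY, hPY]

end Matrix

theorem frobSq_eq_trace {m n : ℕ} (M : Matrix (Fin m) (Fin n) ℝ) : frobSq M = trace (Mᵀ * M) := by
  rw [frobSq, Finset.sum_comm]
  simp [trace, mul_apply, sq]

theorem frobSq_transpose {m n : ℕ} (M : Matrix (Fin m) (Fin n) ℝ) : frobSq Mᵀ = frobSq M :=
  Finset.sum_comm

theorem frobSq_transpose_mul_add_frobSq_sub {m n a : ℕ} {U : Matrix (Fin m) (Fin a) ℝ}
    (hU : Uᵀ * U = 1) (M : Matrix (Fin m) (Fin n) ℝ) :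
    frobSq (Uᵀ * M) + frobSq (M - U * (Uᵀ * M)) = frobSq M := by
  have hUU : ∀ {k} (N : Matrix (Fin a) (Fin k) ℝ), Uᵀ * (U * N) = N := fun N => by
    rw [← Matrix.mul_assoc, hU, Matrix.one_mul]
  rw [frobSq_eq_trace, frobSq_eq_trace, frobSq_eq_trace, ← trace_add]
  congr 1
  simp only [transpose_sub, transpose_mul, transpose_transpose, Matrix.sub_mul, Matrix.mul_sub,
    Matrix.mul_assoc, hUU]
  abel

theorem frobSq_transpose_mul_le {m n a : ℕ} {U : Matrix (Fin m) (Fin a) ℝ} (hU : Uᵀ * U = 1)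
    (M : Matrix (Fin m) (Fin n) ℝ) : frobSq (Uᵀ * M) ≤ frobSq M := by
  rw [← frobSq_transpose_mul_add_frobSq_sub hU M, le_add_iff_nonneg_right]
  exact Finset.sum_nonneg fun _ _ => Finset.sum_nonneg fun _ _ => sq_nonneg _

theorem frobSq_mul_le {m n a : ℕ} {U : Matrix (Fin n) (Fin a) ℝ} (hU : Uᵀ * U = 1)
    (N : Matrix (Fin m) (Fin n) ℝ) : frobSq (N * U) ≤ frobSq N := by
  rw [← frobSq_transpose, transpose_mul, ← frobSq_transpose N]
  exact frobSq_transpose_mul_le hU Nᵀ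

theorem frobSq_transpose_mul_of_mul_transpose_mul_eq {m n a : ℕ} {U : Matrix (Fin m) (Fin a) ℝ}
    {M : Matrix (Fin m) (Fin n) ℝ} (hM : U * (Uᵀ * M) = M) : frobSq (Uᵀ * M) = frobSq M := by
  rw [frobSq_eq_trace, frobSq_eq_trace, transpose_mul, transpose_transpose, Matrix.mul_assoc, hM]

theorem frobSq_diagonal_mul_le {p n : ℕ} {d e : Fin p → ℝ} (hde : ∀ i, d i ^ 2 ≤ e i ^ 2)
    (M : Matrix (Fin p) (Fin n) ℝ) : frobSq (diagonal d * M) ≤ frobSq (diagonal e * M) := by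
  refine Finset.sum_le_sum fun i _ => Finset.sum_le_sum fun j _ => ?_
  simp only [diagonal_mul, mul_pow]
  exact mul_le_mul_of_nonneg_right (hde i) (sq_nonneg _)

theorem trace_transpose_mul_transpose_mul_mul {n p a : ℕ} (X : Matrix (Fin n) (Fin p) ℝ)
    (W : Matrix (Fin p) (Fin a) ℝ) : trace (Wᵀ * Xᵀ * X * W) = frobSq (X * W) := by
  simp only [frobSq_eq_trace, transpose_mul, Matrix.mul_assoc]

theorem isBinary_indicator {p : ℕ} (T : Finset (Fin p)) :
    IsBinary ((T : Set (Fin p)).indicator 1) :=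
  fun i => by by_cases hi : i ∈ T <;> simp [hi]

theorem sum_indicator_one {p : ℕ} (T : Finset (Fin p)) :
    ∑ i, (T : Set (Fin p)).indicator (1 : Fin p → ℝ) i = T.card := by
  simp [Set.indicator_apply]

theorem IsBinary.exists_eq_indicator {p : ℕ} {s : Fin p → ℝ} (hs : IsBinary s) :
    ∃ T : Finset (Fin p), s = (T : Set (Fin p)).indicator 1 := by
  refine ⟨Finset.univ.filter fun i => s i = 1, funext fun i => ?_⟩
  rcases hs i with h | h <;> simp [h]

theorem IsBinary.sum_mul_sum_sq_eq_frobSq {n p a : ℕ} {s : Fin p → ℝ} (hs : IsBinary s)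
    (X : Matrix (Fin n) (Fin p) ℝ) (U : Matrix (Fin n) (Fin a) ℝ) :
    ∑ i, s i * ∑ j, (∑ r, X r i * U r j) ^ 2 = frobSq (diagonal s * (Xᵀ * U)) := by
  refine Finset.sum_congr rfl fun i _ => ?_
  rw [Finset.mul_sum]
  refine Finset.sum_congr rfl fun j _ => ?_
  have hsq : s i ^ 2 = s i := by rcases hs i with h | h <;> simp [h]
  rw [diagonal_mul, mul_pow, hsq]
  simp [mul_apply]

theorem transpose_mul_diagonal_indicator_mul {p a n : ℕ} {T : Finset (Fin p)}
    {W : Matrix (Fin p) (Fin a) ℝ} (hW : ∀ i ∉ T, ∀ j, W i j = 0) (M : Matrix (Fin p) (Fin n) ℝ) :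
    Wᵀ * (diagonal ((T : Set (Fin p)).indicator (1 : Fin p → ℝ)) * M) = Wᵀ * M := by
  ext j c
  rw [mul_apply, mul_apply]
  refine Finset.sum_congr rfl fun i _ => ?_
  by_cases hi : i ∈ T
  · simp [hi]
  · simp [hW i hi j]

theorem nnzRows_le_card {p a : ℕ} {W : Matrix (Fin p) (Fin a) ℝ} {S : Finset (Fin p)}
    (hW : ∀ i ∉ S, ∀ j, W i j = 0) : nnzRows W ≤ S.card := by
  rw [nnzRows, ← Set.ncard_coe_finset]
  refine Set.ncard_le_ncard (fun i ⟨j, hj⟩ => ?_)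
  by_contra hiS
  exact hj (hW i hiS j)

theorem exists_binary_trace_le {n p a k : ℕ} (X : Matrix (Fin n) (Fin p) ℝ) (han : a ≤ n)
    {W : Matrix (Fin p) (Fin a) ℝ} (hW : Wᵀ * W = 1) (hWk : nnzRows W ≤ k) :
    ∃ (s : Fin p → ℝ) (U : Matrix (Fin n) (Fin a) ℝ), IsBinary s ∧ ∑ i, s i ≤ (k : ℝ) ∧
      Uᵀ * U = 1 ∧ trace (Wᵀ * Xᵀ * X * W) ≤ ∑ i, s i * ∑ j, (∑ r, X r i * U r j) ^ 2 := by
  set T := (Set.toFinite {i : Fin p | ∃ j, W i j ≠ 0}).toFinset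
  have hWT : ∀ i ∉ T, ∀ j, W i j = 0 := fun i hi => by simpa [T] using hi
  obtain ⟨U, hU, hUXW⟩ :=
    Matrix.exists_orthonormal_cols_mul_transpose_mul_eq (X * W) (by simpa using han)
  refine ⟨_, U, isBinary_indicator T, ?_, hU, ?_⟩
  · rw [sum_indicator_one, ← Set.ncard_eq_toFinset_card]
    exact_mod_cast hWk
  rw [trace_transpose_mul_transpose_mul_mul, (isBinary_indicator T).sum_mul_sum_sq_eq_frobSq]
  calc frobSq (X * W) = frobSq (Uᵀ * (X * W)) :=
        (frobSq_transpose_mul_of_mul_transpose_mul_eq hUXW).symm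
    _ = frobSq (Wᵀ * (diagonal ((T : Set (Fin p)).indicator (1 : Fin p → ℝ)) * (Xᵀ * U))) := by
        rw [transpose_mul_diagonal_indicator_mul hWT, ← frobSq_transpose]
        simp only [transpose_mul, transpose_transpose, Matrix.mul_assoc]
    _ ≤ _ := frobSq_transpose_mul_le hW _

theorem exists_sparse_le_trace {n p a k : ℕ} (X : Matrix (Fin n) (Fin p) ℝ) (hak : a ≤ k)
    (hkp : k ≤ p) {s : Fin p → ℝ} {U : Matrix (Fin n) (Fin a) ℝ} (hs : IsBinary s)
    (hsk : ∑ i, s i ≤ (k : ℝ)) (hU : Uᵀ * U = 1) :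
    ∃ W : Matrix (Fin p) (Fin a) ℝ, Wᵀ * W = 1 ∧ nnzRows W ≤ k ∧
      ∑ i, s i * ∑ j, (∑ r, X r i * U r j) ^ 2 ≤ trace (Wᵀ * Xᵀ * X * W) := by
  obtain ⟨T, rfl⟩ := hs.exists_eq_indicator
  have hTk : T.card ≤ k := by exact_mod_cast (sum_indicator_one T).symm.trans_le hsk
  -- enlarge the support of `s` so that it can carry `a` orthonormal columns
  obtain ⟨S, hTS, hScard⟩ := Finset.exists_superset_card_eq (s := T) (n := max a T.card)
    (le_max_right _ _) (by simp only [Fintype.card_fin]; omega)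
  set Y := diagonal ((S : Set (Fin p)).indicator (1 : Fin p → ℝ)) * (Xᵀ * U)
  have hY : ∀ i ∉ S, ∀ j, Y i j = 0 := fun i hi j => by simp [Y, diagonal_mul, hi]
  obtain ⟨W, hW, hWS, hWY⟩ :=
    Matrix.exists_orthonormal_cols_supported_mul_transpose_mul_eq S Y (by simp [hScard]) hY
  refine ⟨W, hW, (nnzRows_le_card hWS).trans (by omega), ?_⟩
  rw [trace_transpose_mul_transpose_mul_mul, hs.sum_mul_sum_sq_eq_frobSq]
  calc frobSq (diagonal ((T : Set (Fin p)).indicator (1 : Fin p → ℝ)) * (Xᵀ * U)) ≤ frobSq Y :=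
        frobSq_diagonal_mul_le (fun i => pow_le_pow_left₀ (Set.indicator_nonneg (by simp) i)
          (Set.indicator_le_indicator_of_subset (by simpa using hTS) (by simp) i) 2) _
    _ = frobSq (Wᵀ * Y) := (frobSq_transpose_mul_of_mul_transpose_mul_eq hWY).symm
    _ = frobSq (Wᵀ * Xᵀ * U) := by
        rw [transpose_mul_diagonal_indicator_mul hWS, Matrix.mul_assoc]
    _ ≤ frobSq (Wᵀ * Xᵀ) := frobSq_mul_le hU _
    _ = frobSq (X * W) := by rw [← transpose_mul, frobSq_transpose]

theorem stmt_3_general {n p : ℕ} (X : Matrix (Fin n) (Fin p) ℝ) (a k : ℕ)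
    (han : a ≤ n) (hak : a ≤ k) (hkp : k ≤ p) :
    sSup {v : ℝ | ∃ W : Matrix (Fin p) (Fin a) ℝ,
        Wᵀ * W = 1 ∧ nnzRows W ≤ k ∧ v = trace (Wᵀ * Xᵀ * X * W)} =
    sSup {v : ℝ | ∃ (s : Fin p → ℝ) (U : Matrix (Fin n) (Fin a) ℝ),
        IsBinary s ∧ ∑ i, s i ≤ (k : ℝ) ∧ Uᵀ * U = 1 ∧
        v = ∑ i, s i * ∑ j, (∑ r, X r i * U r j) ^ 2} := by
  apply csSup_eq_csSup_of_forall_exists_le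
  · rintro _ ⟨W, hW, hWk, rfl⟩
    obtain ⟨s, U, hs, hsk, hU, hle⟩ := exists_binary_trace_le X han hW hWk
    exact ⟨_, ⟨s, U, hs, hsk, hU, rfl⟩, hle⟩
  · rintro _ ⟨s, U, hs, hsk, hU, rfl⟩
    obtain ⟨W, hW, hWk, hle⟩ := exists_sparse_le_trace X hak hkp hs hsk hU
    exact ⟨_, ⟨W, hW, hWk, rfl⟩, hle⟩

/-- Proposition 1: Problem (1) and its left-eigenvector reformulation (2)
have the same optimal value. -/
theorem stmt_3 {n p : ℕ} (X : Matrix (Fin n) (Fin p) ℝ) (a k : ℕ)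
    (ha1 : 1 ≤ a) (han : a ≤ n) (hak : a ≤ k) (hkp : k ≤ p) :
    sSup {v : ℝ | ∃ W : Matrix (Fin p) (Fin a) ℝ,
        Wᵀ * W = 1 ∧ nnzRows W ≤ k ∧ v = trace (Wᵀ * Xᵀ * X * W)} =
    sSup {v : ℝ | ∃ (s : Fin p → ℝ) (U : Matrix (Fin n) (Fin a) ℝ),
        IsBinary s ∧ ∑ i, s i ≤ (k : ℝ) ∧ Uᵀ * U = 1 ∧
        v = ∑ i, s i * ∑ j, (∑ r, X r i * U r j) ^ 2} :=
  stmt_3_general X a k han hak hkp
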